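/- Let A = B ⊕ J(A) be a finite dimensional superalgebra over a field F of characteristic zero, with maximal graded semisimple part B of graded dimensions (t₀, t₁) = (dim B_0, dim B_1) and Jacobson radical J(A) nilpotent of degree nd(A). Suppose f is a multilinear graded polynomial containing nd(A) disjoint sets Y_1,...,Y_{nd(A)} of variables such that for each j, f is alternating in the homogeneous subset Y_{j,θ} ⊆ Y_j of degree θ, and for some θ̃ ∈ Z/2Z, |Y_{j,θ̃}| > t_{θ̃} for all j. Then f is a graded identity of A. -/

import Mathlib

/-!
Split each value of an alternating variable as `b + r` with `b ∈ B` and `r ∈ J`, and expand by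
multilinearity. In a term where every collection receives some radical value, each word of `f`
(which contains every variable) evaluates to a product with at least `s` factors in `J`, hence
to `0`. In any other term some collection is evaluated entirely in `B`; since it has more than
`dim B` variables these values are linearly dependent, and an alternating multilinear function
vanishes on them.
-/

/-- Renaming of variables in the free associative algebra along a map `g : V → V`. -/
noncomputable def renameVars (F : Type) [Field F] {V : Type} (g : V → V) :
    FreeAlgebra F V →ₐ[F] FreeAlgebra F V :=
  FreeAlgebra.lift F (fun v => FreeAlgebra.ι F (g v))

/-- The permutation of the variables `(Σ j, Fin (t j)) ⊕ W` acting by `σ` on the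
`j`-th alternating collection `Y_{j,θ̃} = {j} × Fin (t j)` and fixing all other
variables. -/
def fiberPerm {s : ℕ} {t : Fin s → ℕ} {W : Type} (j : Fin s)
    (σ : Equiv.Perm (Fin (t j))) :
    ((Σ j' : Fin s, Fin (t j')) ⊕ W) → ((Σ j' : Fin s, Fin (t j')) ⊕ W) :=
  Sum.map
    (Equiv.sigmaCongrRight (fun j' =>
      if h : j' = j then
        (Equiv.permCongr (finCongr (congrArg t h)).symm σ : Equiv.Perm (Fin (t j')))
      else Equiv.refl (Fin (t j'))))
    id

open Function

theorem Function.Injective.extend_update {α β γ : Type*} [DecidableEq α] [DecidableEq β]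
    {e : α → β} (he : Injective e) (g : α → γ) (w : β → γ) (i : α) (z : γ) :
    extend e (update g i z) w = update (extend e g w) (e i) z := by
  funext b
  by_cases hb : ∃ a, e a = b
  · obtain ⟨a, rfl⟩ := hb
    simp only [he.extend_apply, update_apply, he.eq_iff]
  · have hne : b ≠ e i := fun h => hb ⟨i, h.symm⟩
    rw [extend_apply' _ _ _ hb, update_of_ne hne, extend_apply' _ _ _ hb]

theorem Function.Injective.extend_comp_self {α β γ : Type*} {e : α → β} (he : Injective e)
    (w : β → γ) : extend e (w ∘ e) w = w := by
  funext b
  by_cases hb : ∃ a, e a = b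
  · obtain ⟨a, rfl⟩ := hb
    exact he.extend_apply _ _ a
  · exact extend_apply' _ _ _ hb

theorem TwoSidedIdeal.exists_prod_map_eq_mul_prod {A V : Type*} [Ring A] [DecidableEq V]
    (J : TwoSidedIdeal A) (u : V → A) :
    ∀ (l : List V) (P : Finset V), (∀ p ∈ P, p ∈ l) → (∀ p ∈ P, u p ∈ J) →
      ∃ (a : A) (q : List A), q.length = P.card ∧ (∀ x ∈ q, x ∈ J) ∧
        (l.map u).prod = a * q.prod
  | [], P, hP, _ => by
    obtain rfl : P = ∅ := Finset.eq_empty_of_forall_notMem fun p hp => by simpa using hP p hp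
    exact ⟨1, [], rfl, by simp, by simp⟩
  | x :: l, P, hP, hu => by
    by_cases hx : x ∈ P
    · obtain ⟨a, q, hlen, hq, hprod⟩ := exists_prod_map_eq_mul_prod J u l (P.erase x)
        (fun p hp => (List.mem_cons.mp (hP p (Finset.mem_of_mem_erase hp))).resolve_left
          (Finset.ne_of_mem_erase hp))
        (fun p hp => hu p (Finset.mem_of_mem_erase hp))
      refine ⟨1, (u x * a) :: q, ?_, ?_, ?_⟩
      · simp [hlen, Finset.card_erase_add_one hx]
      · intro y hy
        rcases List.mem_cons.mp hy with rfl | hy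
        · exact J.mul_mem_right _ _ (hu x hx)
        · exact hq y hy
      · simp [hprod, mul_assoc]
    · obtain ⟨a, q, hlen, hq, hprod⟩ := exists_prod_map_eq_mul_prod J u l P
        (fun p hp => (List.mem_cons.mp (hP p hp)).resolve_left (ne_of_mem_of_not_mem hp hx)) hu
      exact ⟨u x * a, q, hlen, hq, by simp [hprod, mul_assoc]⟩

namespace FreeAlgebra

variable {F V A : Type} [Field F] [Ring A] [Algebra F A]

theorem lift_eq_sum_words (u : V → A) (x : FreeAlgebra F V) :
    lift F u x = (equivMonoidAlgebraFreeMonoid x).coeff.sum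
      fun m c => c • (m.toList.map u).prod := by
  have : lift F u = (MonoidAlgebra.lift F A (FreeMonoid V) (FreeMonoid.lift u)).comp
      equivMonoidAlgebraFreeMonoid.toAlgHom := by
    ext q
    simp [equivMonoidAlgebraFreeMonoid]
  rw [this]
  simp [MonoidAlgebra.lift_apply, FreeMonoid.lift_apply]

theorem lift_renameVars (g : V → V) (w : V → A) (x : FreeAlgebra F V) :
    lift F w (renameVars F g x) = lift F (w ∘ g) x := by
  rw [← AlgHom.comp_apply]
  congr 1
  ext
  simp [renameVars]

theorem lift_eq_zero_of_renameVars_eq_neg [CharZero F] {f : FreeAlgebra F V} {g : V → V}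
    (hg : renameVars F g f = -f) {w : V → A} (hw : w ∘ g = w) : lift F w f = 0 := by
  have hneg : lift F w f = -lift F w f := by
    rw [← map_neg, ← hg, lift_renameVars, hw]
  have htwo : (2 : F) • lift F w f = 0 := by
    rw [two_smul]
    nth_rewrite 1 [hneg]
    exact neg_add_cancel _
  exact (smul_eq_zero.mp htwo).resolve_left two_ne_zero

variable [DecidableEq V]

def IsMultilinear (f : FreeAlgebra F V) : Prop :=
  ∀ (p : V) (R : Type) [Ring R] [Algebra F R] (w : V → R),
    IsLinearMap F fun z => lift F (update w p z) f

namespace IsMultilinear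

variable {f : FreeAlgebra F V}

theorem mem_toList_of_mem_support (hf : f.IsMultilinear) (p : V) {m : FreeMonoid V}
    (hm : m ∈ (equivMonoidAlgebraFreeMonoid f).coeff.support) : p ∈ m.toList := by
  by_contra hpm
  -- In the generic substitution, sending `p` to `0` kills exactly the words containing `p`.
  let w : V → MonoidAlgebra F (FreeMonoid V) := update (fun q => .of F _ (.of q)) p 0
  have hword (m' : FreeMonoid V) :
      (m'.toList.map w).prod = if p ∈ m'.toList then 0 else .of F _ m' := by
    split_ifs with hp
    · exact List.prod_eq_zero (List.mem_map.mpr ⟨p, hp, update_self _ _ _⟩)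
    · rw [List.map_congr_left fun q hq => update_of_ne (ne_of_mem_of_not_mem hq hp) _ _,
        ← FreeMonoid.lift_apply]
      exact DFunLike.congr_fun (FreeMonoid.lift_restrict (MonoidAlgebra.of F (FreeMonoid V))) m'
  have hzero : lift F w f = 0 := (hf p _ _).map_zero
  have := congrArg (fun y => y.coeff m) hzero
  simp only [lift_eq_sum_words, Finsupp.sum, MonoidAlgebra.coeff_sum, Finsupp.finsetSum_apply,
    hword] at this
  rw [Finset.sum_eq_single m] at this
  · exact Finsupp.mem_support_iff.mp hm (by simpa [hpm] using this)
  · intro m' _ hne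
    split_ifs <;> simp [hne]
  · exact fun h => (h hm).elim

noncomputable def evalAlong (hf : f.IsMultilinear) {ι : Type*} (e : ι ↪ V) (w : V → A) :
    MultilinearMap F (fun _ : ι => A) A where
  toFun x := lift F (extend e x w) f
  map_update_add' x i a b := by
    simp only [e.injective.extend_update]
    exact (hf (e i) A _).map_add a b
  map_update_smul' x i c a := by
    simp only [e.injective.extend_update]
    exact (hf (e i) A _).map_smul c a

theorem evalAlong_comp (hf : f.IsMultilinear) {ι : Type*} (e : ι ↪ V) (w : V → A) :
    hf.evalAlong e w (w ∘ e) = lift F w f := by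
  simp only [evalAlong, MultilinearMap.coe_mk, e.injective.extend_comp_self]

theorem lift_eq_zero_of_not_linearIndependent (hf : f.IsMultilinear) {ι : Type*} (e : ι ↪ V)
    (halt : ∀ (u : V → A) (i i' : ι), i ≠ i' → u (e i) = u (e i') → lift F u f = 0)
    (u : V → A) (hu : ¬LinearIndependent F (u ∘ e)) : lift F u f = 0 := by
  let Φ : A [⋀^ι]→ₗ[F] A :=
    { hf.evalAlong e u with
      map_eq_zero_of_eq' := fun x i i' hx hne => halt _ i i' hne <| by
        simp only [e.injective.extend_apply, hx] }
  rw [← hf.evalAlong_comp e u]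
  exact Φ.map_linearDependent _ hu

theorem lift_eq_zero_of_mem_nilpotent (hf : f.IsMultilinear) (J : TwoSidedIdeal A)
    (P : Finset V) (hJ : ∀ l : List A, (∀ x ∈ l, x ∈ J) → l.length = P.card → l.prod = 0)
    (u : V → A) (hu : ∀ p ∈ P, u p ∈ J) : lift F u f = 0 := by
  rw [lift_eq_sum_words]
  refine Finset.sum_eq_zero fun m hm => ?_
  obtain ⟨a, q, hlen, hq, hprod⟩ := J.exists_prod_map_eq_mul_prod u m.toList P
    (fun p _ => hf.mem_toList_of_mem_support p hm) hu
  simp only [hprod, hJ q hq hlen, mul_zero, smul_zero]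

end IsMultilinear

end FreeAlgebra

section

variable {s : ℕ} {t : Fin s → ℕ} {W : Type}

theorem fiberPerm_inl_self (j : Fin s) (σ : Equiv.Perm (Fin (t j))) (i : Fin (t j)) :
    fiberPerm (W := W) j σ (.inl ⟨j, i⟩) = .inl ⟨j, σ i⟩ := by
  simp [fiberPerm]

theorem fiberPerm_inl_of_ne {j j' : Fin s} (h : j' ≠ j) (σ : Equiv.Perm (Fin (t j)))
    (i : Fin (t j')) : fiberPerm (W := W) j σ (.inl ⟨j', i⟩) = .inl ⟨j', i⟩ := by
  simp [fiberPerm, h]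

theorem comp_fiberPerm_swap {α : Type*} {w : (Σ j, Fin (t j)) ⊕ W → α} {j : Fin s}
    {i i' : Fin (t j)} (h : w (.inl ⟨j, i⟩) = w (.inl ⟨j, i'⟩)) :
    w ∘ fiberPerm j (Equiv.swap i i') = w := by
  funext q
  rcases q with ⟨j', k⟩ | _
  · by_cases hj : j' = j
    · subst hj
      simp only [comp_apply, fiberPerm_inl_self]
      rcases eq_or_ne k i with rfl | hki
      · rw [Equiv.swap_apply_left, h]
      rcases eq_or_ne k i' with rfl | hki'
      · rw [Equiv.swap_apply_right, h]
      rw [Equiv.swap_apply_of_ne_of_ne hki hki']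
    · simp only [comp_apply, fiberPerm_inl_of_ne hj]
  · rfl

variable {F A : Type} [Field F] [Ring A] [Algebra F A]
  {f : FreeAlgebra F ((Σ j, Fin (t j)) ⊕ W)}

theorem lift_eq_zero_of_apply_eq [CharZero F]
    (halt : ∀ (j : Fin s) (σ : Equiv.Perm (Fin (t j))),
      renameVars F (fiberPerm (W := W) j σ) f = (Equiv.Perm.sign σ : ℤ) • f)
    {w : (Σ j, Fin (t j)) ⊕ W → A} {j : Fin s} {i i' : Fin (t j)} (hne : i ≠ i')
    (h : w (.inl ⟨j, i⟩) = w (.inl ⟨j, i'⟩)) : FreeAlgebra.lift F w f = 0 :=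
  FreeAlgebra.lift_eq_zero_of_renameVars_eq_neg (by simp [halt, Equiv.Perm.sign_swap hne])
    (comp_fiberPerm_swap h)

variable [DecidableEq W]

theorem lift_eq_zero_of_finrank_lt [CharZero F] [FiniteDimensional F A]
    (hf : f.IsMultilinear)
    (halt : ∀ (j : Fin s) (σ : Equiv.Perm (Fin (t j))),
      renameVars F (fiberPerm (W := W) j σ) f = (Equiv.Perm.sign σ : ℤ) • f)
    (B : Submodule F A) (j : Fin s) (hj : Module.finrank F B < t j)
    (u : (Σ j, Fin (t j)) ⊕ W → A) (hu : ∀ i, u (.inl ⟨j, i⟩) ∈ B) :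
    FreeAlgebra.lift F u f = 0 := by
  let e : Fin (t j) ↪ (Σ j, Fin (t j)) ⊕ W :=
    ⟨fun i => .inl ⟨j, i⟩, fun i i' h => by simpa using h⟩
  refine hf.lift_eq_zero_of_not_linearIndependent e
    (fun _ _ _ hne h => lift_eq_zero_of_apply_eq halt hne h) u fun hli => ?_
  have hspan : Submodule.span F (Set.range (u ∘ e)) ≤ B :=
    Submodule.span_le.mpr (Set.range_subset_iff.mpr hu)
  have := (linearIndependent_iff_card_le_finrank_span.mp hli).trans
    (Submodule.finrank_mono hspan)
  simp only [Fintype.card_fin] at this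
  omega

theorem lift_eq_zero_of_forall_exists_apply_mem (hf : f.IsMultilinear) (J : TwoSidedIdeal A)
    (hJ : ∀ l : List A, (∀ x ∈ l, x ∈ J) → l.length = s → l.prod = 0)
    (u : (Σ j, Fin (t j)) ⊕ W → A) (hu : ∀ j, ∃ i, u (.inl ⟨j, i⟩) ∈ J) :
    FreeAlgebra.lift F u f = 0 := by
  choose i hi using hu
  let P := Finset.univ.image fun j => (.inl ⟨j, i j⟩ : (Σ j, Fin (t j)) ⊕ W)
  have hP : P.card = s := by
    rw [Finset.card_image_of_injective _ fun j j' h => congrArg Sigma.fst (Sum.inl_injective h),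
      Finset.card_univ, Fintype.card_fin]
  refine hf.lift_eq_zero_of_mem_nilpotent J P (by rwa [hP]) u ?_
  simpa [P] using hi

end

theorem thick_alternating_is_graded_identity_general
    (F A : Type) [Field F] [CharZero F] [Ring A] [Algebra F A] [FiniteDimensional F A]
    (𝒜 : ZMod 2 → Submodule F A)
    (θt : ZMod 2) (B : Submodule F A)
    (J : TwoSidedIdeal A) (s : ℕ)
    -- `J` is nilpotent of degree `s`:
    (hJnil : ∀ l : List A, (∀ x ∈ l, x ∈ J) → l.length = s → l.prod = 0)
    -- the degree-`θ̃` component of `A` splits as `B_θ̃ ⊕ J_θ̃`: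
    (hdec : ∀ a ∈ 𝒜 θt, ∃ b ∈ B, ∃ r, r ∈ J ∧ r ∈ 𝒜 θt ∧ a = b + r)
    (t : Fin s → ℕ) (ht : ∀ j, Module.finrank F B < t j)
    (W : Type) [DecidableEq W]
    (f : FreeAlgebra F ((Σ j : Fin s, Fin (t j)) ⊕ W))
    -- `f` is multilinear (linear in each of its variables):
    (hlin : ∀ (p : (Σ j : Fin s, Fin (t j)) ⊕ W)
        (Bg : Type) [Ring Bg] [Algebra F Bg]
        (w : ((Σ j : Fin s, Fin (t j)) ⊕ W) → Bg),
        IsLinearMap F fun z => FreeAlgebra.lift F (Function.update w p z) f)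
    -- `f` is alternating in each collection `Y_{j,θ̃}`:
    (halt : ∀ (j : Fin s) (σ : Equiv.Perm (Fin (t j))),
        renameVars F (fiberPerm (W := W) j σ) f = (Equiv.Perm.sign σ : ℤ) • f)
    -- any graded substitution:
    (v : ((Σ j' : Fin s, Fin (t j')) ⊕ W) → A)
    (hvY : ∀ p : Σ j' : Fin s, Fin (t j'), v (Sum.inl p) ∈ 𝒜 θt) :
    FreeAlgebra.lift F v f = 0 := by
  have hf : f.IsMultilinear := hlin
  choose b hb r hr _ hbr using fun p => hdec (v (.inl p)) (hvY p)
  have hv : v ∘ Embedding.inl = r + b := funext fun p => (hbr p).trans (add_comm _ _)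
  rw [← hf.evalAlong_comp .inl v, hv, MultilinearMap.map_add_univ]
  refine Finset.sum_eq_zero fun T _ => ?_
  have hu (p) : extend Embedding.inl (T.piecewise r b) v (.inl p) = T.piecewise r b p :=
    Sum.inl_injective.extend_apply _ _ p
  by_cases hT : ∀ j, ∃ i, ⟨j, i⟩ ∈ T
  · refine lift_eq_zero_of_forall_exists_apply_mem hf J hJnil _ fun j => ?_
    obtain ⟨i, hi⟩ := hT j
    exact ⟨i, by simpa [hu, hi] using hr _⟩
  · obtain ⟨j, hj⟩ : ∃ j, ∀ i, ⟨j, i⟩ ∉ T := by simpa using hT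
    refine lift_eq_zero_of_finrank_lt hf halt B j (ht j) _ fun i => ?_
    simpa [hu, hj i] using hb _

/-- let `A = B ⊕ J(A)` be a finite dimensional superalgebra over a
field of characteristic zero, with maximal graded semisimple part `B` and radical
`J(A)` nilpotent of degree `nd(A) = s`.  If a multilinear graded polynomial `f`
contains `s` disjoint collections of variables, alternating in the homogeneous
subset of degree `θ̃` of each collection, and each of these `θ̃`-subsets has more
than `dim B_θ̃` variables, then `f` is a graded identity of `A`. -/
theorem thick_alternating_is_graded_identity
    (F A : Type) [Field F] [CharZero F] [Ring A] [Algebra F A] [FiniteDimensional F A]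
    (𝒜 : ZMod 2 → Submodule F A)
    (hmul : ∀ θ ξ : ZMod 2, ∀ x ∈ 𝒜 θ, ∀ y ∈ 𝒜 ξ, x * y ∈ 𝒜 (θ + ξ))
    (θt : ZMod 2) (B : Submodule F A) (hB : B ≤ 𝒜 θt)
    (J : TwoSidedIdeal A) (s : ℕ)
    -- `J` is nilpotent of degree `s`:
    (hJnil : ∀ l : List A, (∀ x ∈ l, x ∈ J) → l.length = s → l.prod = 0)
    -- the degree-`θ̃` component of `A` splits as `B_θ̃ ⊕ J_θ̃`:
    (hdec : ∀ a ∈ 𝒜 θt, ∃ b ∈ B, ∃ r, r ∈ J ∧ r ∈ 𝒜 θt ∧ a = b + r)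
    (t : Fin s → ℕ) (ht : ∀ j, Module.finrank F B < t j)
    (W : Type) [DecidableEq W] (parW : W → ZMod 2)
    (f : FreeAlgebra F ((Σ j : Fin s, Fin (t j)) ⊕ W))
    -- `f` is multilinear (linear in each of its variables):
    (hlin : ∀ (p : (Σ j : Fin s, Fin (t j)) ⊕ W)
        (Bg : Type) [Ring Bg] [Algebra F Bg]
        (w : ((Σ j : Fin s, Fin (t j)) ⊕ W) → Bg),
        IsLinearMap F fun z => FreeAlgebra.lift F (Function.update w p z) f)
    -- `f` is alternating in each collection `Y_{j,θ̃}`: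
    (halt : ∀ (j : Fin s) (σ : Equiv.Perm (Fin (t j))),
        renameVars F (fiberPerm (W := W) j σ) f = (Equiv.Perm.sign σ : ℤ) • f)
    -- any graded substitution:
    (v : ((Σ j' : Fin s, Fin (t j')) ⊕ W) → A)
    (hvY : ∀ p : Σ j' : Fin s, Fin (t j'), v (Sum.inl p) ∈ 𝒜 θt)
    (hvW : ∀ w : W, v (Sum.inr w) ∈ 𝒜 (parW w)) :
    FreeAlgebra.lift F v f = 0 :=
  thick_alternating_is_graded_identity_general F A 𝒜 θt B J s hJnil hdec t ht W f hlin halt v hvY
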